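/- arXiv:2507.12859 — 6 statements merged into one kernel-verified Lean document; each statement's English description precedes it below -/
import Mathlib

section
/- Let T₁, T₂, T₃ be vectors in ℝ² with ‖T₁‖ = ‖T₂‖ = ‖T₃‖ = 1, suppose T₃ = a•T₁ + b•T₂ with a, b integers, suppose the cross products satisfy cross(T₁,T₂) = cross(T₂,T₃) and cross(T₁,T₂) ≠ 0, suppose T₃ ≠ T₁ and T₃ ≠ −T₁, and suppose the inner product ⟪T₁, T₂⟫ > 0. Then a = −1 and b = 1; in particular T₁ + T₃ = T₂. -/
open RealInnerProductSpace

/-- The planar cross product (signed area) of two vectors in `ℝ²`. -/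
def cross (u v : EuclideanSpace ℝ (Fin 2)) : ℝ := u 0 * v 1 - u 1 * v 0

theorem stmt_0 (T₁ T₂ T₃ : EuclideanSpace ℝ (Fin 2)) (a b : ℤ)
    (h1 : ‖T₁‖ = 1) (h2 : ‖T₂‖ = 1) (h3 : ‖T₃‖ = 1)
    (hT : T₃ = (a : ℝ) • T₁ + (b : ℝ) • T₂)
    (hcross : cross T₁ T₂ = cross T₂ T₃) (hcross0 : cross T₁ T₂ ≠ 0)
    (hne : T₃ ≠ T₁) (hne' : T₃ ≠ -T₁)
    (hinner : ⟪T₁, T₂⟫ > 0) :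
    a = -1 ∧ b = 1 ∧ T₁ + T₃ = T₂ := by
  have e0 : T₃ 0 = (a : ℝ) * T₁ 0 + (b : ℝ) * T₂ 0 := by rw [hT]; simp
  have e1 : T₃ 1 = (a : ℝ) * T₁ 1 + (b : ℝ) * T₂ 1 := by rw [hT]; simp
  have n1 : T₁ 0 ^ 2 + T₁ 1 ^ 2 = 1 := by
    have h := real_inner_self_eq_norm_sq T₁
    rw [h1] at h
    simp only [PiLp.inner_apply, Fin.sum_univ_two, RCLike.inner_apply, conj_trivial] at h
    nlinarith [h]
  have n2 : T₂ 0 ^ 2 + T₂ 1 ^ 2 = 1 := by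
    have h := real_inner_self_eq_norm_sq T₂
    rw [h2] at h
    simp only [PiLp.inner_apply, Fin.sum_univ_two, RCLike.inner_apply, conj_trivial] at h
    nlinarith [h]
  have n3 : T₃ 0 ^ 2 + T₃ 1 ^ 2 = 1 := by
    have h := real_inner_self_eq_norm_sq T₃
    rw [h3] at h
    simp only [PiLp.inner_apply, Fin.sum_univ_two, RCLike.inner_apply, conj_trivial] at h
    nlinarith [h]
  have hi : T₁ 0 * T₂ 0 + T₁ 1 * T₂ 1 > 0 := by
    have h := hinner
    rw [PiLp.inner_apply] at h
    simpa [Fin.sum_univ_two, mul_comm] using h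
  have hc0 : T₁ 0 * T₂ 1 - T₁ 1 * T₂ 0 ≠ 0 := hcross0
  -- Lagrange identity
  have lag : (T₁ 0 * T₂ 1 - T₁ 1 * T₂ 0) ^ 2 + (T₁ 0 * T₂ 0 + T₁ 1 * T₂ 1) ^ 2 = 1 := by
    linear_combination (T₂ 0 ^ 2 + T₂ 1 ^ 2) * n1 + n2
  -- cross equation gives a = -1
  have hcr : cross T₁ T₂ = -(a : ℝ) * cross T₁ T₂ := by
    have h := hcross
    simp only [cross, e0, e1] at h ⊢
    linear_combination h
  have ha : (a : ℝ) = -1 := by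
    have h : ((a : ℝ) + 1) * cross T₁ T₂ = 0 := by linarith [hcr]
    rcases mul_eq_zero.1 h with h | h
    · linarith
    · exact absurd h hcross0
  have haz : a = -1 := by exact_mod_cast ha
  have key : (b : ℝ) ^ 2 = 2 * (b : ℝ) * (T₁ 0 * T₂ 0 + T₁ 1 * T₂ 1) := by
    rw [e0, e1, ha] at n3
    linear_combination n3 - n1 - (b : ℝ) ^ 2 * n2
  have hbne : (b : ℝ) ≠ 0 := by
    intro hb0
    apply hne'
    rw [hT, ha, hb0]
    ext i
    fin_cases i <;> simp
  have hb2t : (b : ℝ) = 2 * (T₁ 0 * T₂ 0 + T₁ 1 * T₂ 1) := by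
    have h : (b : ℝ) * ((b : ℝ) - 2 * (T₁ 0 * T₂ 0 + T₁ 1 * T₂ 1)) = 0 := by
      linear_combination key
    rcases mul_eq_zero.1 h with h | h
    · exact absurd h hbne
    · linarith
  have hcsq : 0 < (T₁ 0 * T₂ 1 - T₁ 1 * T₂ 0) ^ 2 := by positivity
  have hsq : (T₁ 0 * T₂ 0 + T₁ 1 * T₂ 1) ^ 2 < 1 := by linarith [lag, hcsq]
  have ht1 : T₁ 0 * T₂ 0 + T₁ 1 * T₂ 1 < 1 := by
    by_contra hle
    push_neg at hle
    have h2 : (1 : ℝ) ≤ (T₁ 0 * T₂ 0 + T₁ 1 * T₂ 1) ^ 2 := by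
      calc (1 : ℝ) = 1 ^ 2 := by norm_num
        _ ≤ _ := by exact pow_le_pow_left₀ (by norm_num) hle 2
    linarith
  have hb1 : b = 1 := by
    have h0 : (0 : ℝ) < (b : ℝ) := by linarith
    have h2' : (b : ℝ) < 2 := by linarith
    have h0' : (0 : ℤ) < b := by exact_mod_cast h0
    have h2'' : b < 2 := by exact_mod_cast h2'
    omega
  refine ⟨haz, hb1, ?_⟩
  have hbR : (b : ℝ) = 1 := by rw [hb1]; norm_num
  rw [hT, ha, hbR]
  ext i
  fin_cases i <;> simp
end

section
/- For every θ ∈ (0, π/2) and every z ∈ ℂ with z ∉ {p₁, p₂, p₃, p₄}, one has φ₁(z)² + φ₂(z)² + φ₃(z)² = 0. (This is the conformality condition Q = Φ₁² + Φ₂² + Φ₃² = 0 for the Weierstrass data of the doubly periodic Scherk surface.) -/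
open scoped Real

/-- End directions θ₁ = θ, θ₂ = π − θ, θ₃ = −π + θ, θ₄ = −θ. -/
noncomputable def scherkAngle (θ : ℝ) : Fin 4 → ℝ := ![θ, π - θ, -π + θ, -θ]

/-- Signs σ₁ = σ₃ = 1, σ₂ = σ₄ = −1. -/
noncomputable def scherkSign : Fin 4 → ℝ := ![1, -1, 1, -1]

/-- Punctures p₁ = −exp(−iϑ), p₂ = exp(iϑ), p₃ = exp(−iϑ), p₄ = −exp(iϑ). -/
noncomputable def scherkPuncture (ϑ : ℝ) : Fin 4 → ℂ :=
  ![-Complex.exp (-(Complex.I * (ϑ : ℂ))), Complex.exp (Complex.I * (ϑ : ℂ)),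
    Complex.exp (-(Complex.I * (ϑ : ℂ))), -Complex.exp (Complex.I * (ϑ : ℂ))]

/-- φ₁(z) = Σⱼ (−i cos θⱼ)/(z − pⱼ). -/
noncomputable def scherkPhi₁ (θ ϑ : ℝ) (z : ℂ) : ℂ :=
  ∑ j : Fin 4, (-Complex.I * (Real.cos (scherkAngle θ j) : ℂ)) / (z - scherkPuncture ϑ j)

/-- φ₂(z) = Σⱼ (−i sin θⱼ)/(z − pⱼ). -/
noncomputable def scherkPhi₂ (θ ϑ : ℝ) (z : ℂ) : ℂ :=
  ∑ j : Fin 4, (-Complex.I * (Real.sin (scherkAngle θ j) : ℂ)) / (z - scherkPuncture ϑ j)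

/-- φ₃(z) = Σⱼ σⱼ/(z − pⱼ). -/
noncomputable def scherkPhi₃ (ϑ : ℝ) (z : ℂ) : ℂ :=
  ∑ j : Fin 4, ((scherkSign j : ℝ) : ℂ) / (z - scherkPuncture ϑ j)

theorem stmt_4 (θ : ℝ) (hθ : θ ∈ Set.Ioo 0 (π / 2)) (z : ℂ)
    (hz : ∀ j : Fin 4, z ≠ scherkPuncture (π / 2 - θ) j) :
    scherkPhi₁ θ (π / 2 - θ) z ^ 2 + scherkPhi₂ θ (π / 2 - θ) z ^ 2
      + scherkPhi₃ (π / 2 - θ) z ^ 2 = 0 := by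
  have hzd : ∀ j : Fin 4, z - scherkPuncture (π / 2 - θ) j ≠ 0 :=
    fun j => sub_ne_zero_of_ne (hz j)
  have hE : Complex.exp (Complex.I * (((π / 2 - θ : ℝ)) : ℂ))
      = (Real.sin θ : ℂ) + (Real.cos θ : ℂ) * Complex.I := by
    rw [mul_comm, Complex.exp_mul_I, ← Complex.ofReal_cos, ← Complex.ofReal_sin,
      Real.cos_pi_div_two_sub, Real.sin_pi_div_two_sub]
  have hE' : Complex.exp (-(Complex.I * (((π / 2 - θ : ℝ)) : ℂ)))
      = (Real.sin θ : ℂ) - (Real.cos θ : ℂ) * Complex.I := by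
    have h : -(Complex.I * (((π / 2 - θ : ℝ)) : ℂ)) = ((-(π / 2 - θ) : ℝ) : ℂ) * Complex.I := by
      push_cast; ring
    rw [h, Complex.exp_mul_I, ← Complex.ofReal_cos, ← Complex.ofReal_sin,
      Real.cos_neg, Real.sin_neg, Real.cos_pi_div_two_sub, Real.sin_pi_div_two_sub]
    push_cast; ring
  have hp0 : scherkPuncture (π/2 - θ) 0
      = -((Real.sin θ : ℂ) - (Real.cos θ : ℂ) * Complex.I) := by
    rw [show scherkPuncture (π/2 - θ) 0
        = -Complex.exp (-(Complex.I * (((π/2 - θ:ℝ)):ℂ))) from rfl, hE']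
  have hp1 : scherkPuncture (π/2 - θ) 1
      = (Real.sin θ : ℂ) + (Real.cos θ : ℂ) * Complex.I := by
    rw [show scherkPuncture (π/2 - θ) 1
        = Complex.exp (Complex.I * (((π/2 - θ:ℝ)):ℂ)) from rfl, hE]
  have hp2 : scherkPuncture (π/2 - θ) 2
      = (Real.sin θ : ℂ) - (Real.cos θ : ℂ) * Complex.I := by
    rw [show scherkPuncture (π/2 - θ) 2
        = Complex.exp (-(Complex.I * (((π/2 - θ:ℝ)):ℂ))) from rfl, hE']
  have hp3 : scherkPuncture (π/2 - θ) 3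
      = -((Real.sin θ : ℂ) + (Real.cos θ : ℂ) * Complex.I) := by
    rw [show scherkPuncture (π/2 - θ) 3
        = -Complex.exp (Complex.I * (((π/2 - θ:ℝ)):ℂ)) from rfl, hE]
  have d0 : z - -((Real.sin θ : ℂ) - (Real.cos θ : ℂ) * Complex.I) ≠ 0 := hp0 ▸ hzd 0
  have d1 : z - ((Real.sin θ : ℂ) + (Real.cos θ : ℂ) * Complex.I) ≠ 0 := hp1 ▸ hzd 1
  have d2 : z - ((Real.sin θ : ℂ) - (Real.cos θ : ℂ) * Complex.I) ≠ 0 := hp2 ▸ hzd 2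
  have d3 : z - -((Real.sin θ : ℂ) + (Real.cos θ : ℂ) * Complex.I) ≠ 0 := hp3 ▸ hzd 3
  have h1 : scherkPhi₁ θ (π / 2 - θ) z =
      (4 * Complex.I * (Real.cos θ : ℂ) * (Real.sin θ : ℂ) * z ^ 2
        - 4 * Complex.I * (Real.cos θ : ℂ) * (Real.sin θ : ℂ) ^ 3
        - 4 * Complex.I * (Real.cos θ : ℂ) ^ 3 * (Real.sin θ : ℂ)) /
      ((z - -((Real.sin θ : ℂ) - (Real.cos θ : ℂ) * Complex.I))
        * (z - ((Real.sin θ : ℂ) + (Real.cos θ : ℂ) * Complex.I))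
        * (z - ((Real.sin θ : ℂ) - (Real.cos θ : ℂ) * Complex.I))
        * (z - -((Real.sin θ : ℂ) + (Real.cos θ : ℂ) * Complex.I))) := by
    simp only [scherkPhi₁, Fin.sum_univ_four, scherkAngle, Matrix.cons_val_zero,
      Matrix.cons_val_one, Matrix.head_cons, hp0, hp1, hp2, hp3]
    rw [show (![θ, π - θ, -π + θ, -θ] : Fin 4 → ℝ) 2 = -π + θ from rfl,
      show (![θ, π - θ, -π + θ, -θ] : Fin 4 → ℝ) 3 = -θ from rfl]
    rw [show (-π + θ) = -(π - θ) from by ring, Real.cos_neg (π - θ), Real.cos_pi_sub, Real.cos_neg θ]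
    simp only [Complex.ofReal_neg]
    rw [div_add_div _ _ d0 d1, div_add_div _ _ (mul_ne_zero d0 d1) d2,
      div_add_div _ _ (mul_ne_zero (mul_ne_zero d0 d1) d2) d3]
    congr 1
    linear_combination (4 * (Real.cos θ : ℂ) ^ 3 * (Real.sin θ : ℂ) * Complex.I) * Complex.I_sq
  have h2 : scherkPhi₂ θ (π / 2 - θ) z =
      (4 * (Real.cos θ : ℂ) * (Real.sin θ : ℂ) * z ^ 2
        + 4 * (Real.cos θ : ℂ) * (Real.sin θ : ℂ) ^ 3
        + 4 * (Real.cos θ : ℂ) ^ 3 * (Real.sin θ : ℂ)) /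
      ((z - -((Real.sin θ : ℂ) - (Real.cos θ : ℂ) * Complex.I))
        * (z - ((Real.sin θ : ℂ) + (Real.cos θ : ℂ) * Complex.I))
        * (z - ((Real.sin θ : ℂ) - (Real.cos θ : ℂ) * Complex.I))
        * (z - -((Real.sin θ : ℂ) + (Real.cos θ : ℂ) * Complex.I))) := by
    simp only [scherkPhi₂, Fin.sum_univ_four, scherkAngle, Matrix.cons_val_zero,
      Matrix.cons_val_one, Matrix.head_cons, hp0, hp1, hp2, hp3]
    rw [show (![θ, π - θ, -π + θ, -θ] : Fin 4 → ℝ) 2 = -π + θ from rfl,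
      show (![θ, π - θ, -π + θ, -θ] : Fin 4 → ℝ) 3 = -θ from rfl]
    rw [show (-π + θ) = -(π - θ) from by ring, Real.sin_neg (π - θ), Real.sin_pi_sub, Real.sin_neg θ]
    simp only [Complex.ofReal_neg]
    rw [div_add_div _ _ d0 d1, div_add_div _ _ (mul_ne_zero d0 d1) d2,
      div_add_div _ _ (mul_ne_zero (mul_ne_zero d0 d1) d2) d3]
    congr 1
    linear_combination (-4 * (Real.cos θ : ℂ) * (Real.sin θ : ℂ) ^ 3
      - 4 * (Real.cos θ : ℂ) ^ 3 * (Real.sin θ : ℂ)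
      + 4 * (Real.cos θ : ℂ) ^ 3 * (Real.sin θ : ℂ) * Complex.I ^ 2
      - 4 * z ^ 2 * (Real.cos θ : ℂ) * (Real.sin θ : ℂ)) * Complex.I_sq
  have h3 : scherkPhi₃ (π / 2 - θ) z =
      (-8 * Complex.I * (Real.cos θ : ℂ) * (Real.sin θ : ℂ) * z) /
      ((z - -((Real.sin θ : ℂ) - (Real.cos θ : ℂ) * Complex.I))
        * (z - ((Real.sin θ : ℂ) + (Real.cos θ : ℂ) * Complex.I))
        * (z - ((Real.sin θ : ℂ) - (Real.cos θ : ℂ) * Complex.I))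
        * (z - -((Real.sin θ : ℂ) + (Real.cos θ : ℂ) * Complex.I))) := by
    simp only [scherkPhi₃, Fin.sum_univ_four, scherkSign, Matrix.cons_val_zero,
      Matrix.cons_val_one, Matrix.head_cons, hp0, hp1, hp2, hp3]
    rw [show (![(1:ℝ), -1, 1, -1] : Fin 4 → ℝ) 2 = 1 from rfl,
      show (![(1:ℝ), -1, 1, -1] : Fin 4 → ℝ) 3 = -1 from rfl]
    simp only [Complex.ofReal_one, Complex.ofReal_neg]
    rw [div_add_div _ _ d0 d1, div_add_div _ _ (mul_ne_zero d0 d1) d2,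
      div_add_div _ _ (mul_ne_zero (mul_ne_zero d0 d1) d2) d3]
    congr 1
    ring
  have hP : (Real.sin θ : ℂ) ^ 2 + (Real.cos θ : ℂ) ^ 2 = 1 := by
    exact_mod_cast Real.sin_sq_add_cos_sq θ
  rw [h1, h2, h3, div_pow, div_pow, div_pow, ← add_div, ← add_div]
  have key : (4 * Complex.I * (Real.cos θ : ℂ) * (Real.sin θ : ℂ) * z ^ 2
        - 4 * Complex.I * (Real.cos θ : ℂ) * (Real.sin θ : ℂ) ^ 3
        - 4 * Complex.I * (Real.cos θ : ℂ) ^ 3 * (Real.sin θ : ℂ)) ^ 2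
      + (4 * (Real.cos θ : ℂ) * (Real.sin θ : ℂ) * z ^ 2
        + 4 * (Real.cos θ : ℂ) * (Real.sin θ : ℂ) ^ 3
        + 4 * (Real.cos θ : ℂ) ^ 3 * (Real.sin θ : ℂ)) ^ 2
      + (-8 * Complex.I * (Real.cos θ : ℂ) * (Real.sin θ : ℂ) * z) ^ 2 = 0 := by
    linear_combination (16 * (Real.cos θ : ℂ) ^ 2 * (Real.sin θ : ℂ) ^ 6
        + 32 * (Real.cos θ : ℂ) ^ 4 * (Real.sin θ : ℂ) ^ 4
        + 16 * (Real.cos θ : ℂ) ^ 6 * (Real.sin θ : ℂ) ^ 2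
        + 64 * z ^ 2 * (Real.cos θ : ℂ) ^ 2 * (Real.sin θ : ℂ) ^ 2
        - 32 * z ^ 2 * (Real.cos θ : ℂ) ^ 2 * (Real.sin θ : ℂ) ^ 4
        - 32 * z ^ 2 * (Real.cos θ : ℂ) ^ 4 * (Real.sin θ : ℂ) ^ 2
        + 16 * z ^ 4 * (Real.cos θ : ℂ) ^ 2 * (Real.sin θ : ℂ) ^ 2) * Complex.I_sq
      + (64 * z ^ 2 * (Real.cos θ : ℂ) ^ 2 * (Real.sin θ : ℂ) ^ 2) * hP
  rw [key, zero_div]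
end

section
/- Let θ, ϑ ∈ (0, π/2) be arbitrary (not assumed related). If φ₁(z)² + φ₂(z)² + φ₃(z)² = 0 for every z ∈ ℂ with z ∉ {p₁, p₂, p₃, p₄}, then ϑ = π/2 − θ. (The conformality condition determines the position of the punctures from the end directions.) -/
open scoped Real

section
variable (θ ϑ : ℝ)

theorem aux_setup :
    Complex.exp (Complex.I * ϑ) = (Real.cos ϑ : ℂ) + (Real.sin ϑ : ℂ) * Complex.I ∧
    Complex.exp (-(Complex.I * ϑ)) = (Real.cos ϑ : ℂ) - (Real.sin ϑ : ℂ) * Complex.I := by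
  rw [Complex.ofReal_cos, Complex.ofReal_sin]
  constructor
  · rw [mul_comm, Complex.exp_mul_I]
  · have : -(Complex.I * (ϑ:ℂ)) = (-(ϑ:ℂ)) * Complex.I := by ring
    rw [this, Complex.exp_mul_I, Complex.cos_neg, Complex.sin_neg]; ring

theorem e1 : scherkPhi₁ θ ϑ 0 = -4*Complex.I*(Real.cos θ : ℂ)*(Real.cos ϑ : ℂ) := by
  obtain ⟨hexp1, hexp2⟩ := aux_setup ϑ
  have ha : -π + θ = θ - π := by ring
  simp only [scherkPhi₁, scherkAngle, scherkPuncture, Fin.sum_univ_four,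
    Matrix.cons_val_zero, Matrix.cons_val_one, Matrix.head_cons,
    Matrix.cons_val_two, Matrix.tail_cons, Matrix.cons_val_three,
    ha, Real.cos_pi_sub, Real.cos_sub_pi, Real.cos_neg,
    zero_sub, neg_neg, div_neg, inv_neg, div_eq_mul_inv, ← Complex.exp_neg,
    Complex.ofReal_neg]
  simp only [neg_neg, hexp1, hexp2]
  ring

theorem e2 : scherkPhi₂ θ ϑ 0 = 4*(Real.sin θ : ℂ)*(Real.sin ϑ : ℂ) := by
  obtain ⟨hexp1, hexp2⟩ := aux_setup ϑ
  have ha : -π + θ = θ - π := by ring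
  simp only [scherkPhi₂, scherkAngle, scherkPuncture, Fin.sum_univ_four,
    Matrix.cons_val_zero, Matrix.cons_val_one, Matrix.head_cons,
    Matrix.cons_val_two, Matrix.tail_cons, Matrix.cons_val_three,
    ha, Real.sin_pi_sub, Real.sin_sub_pi, Real.sin_neg,
    zero_sub, neg_neg, div_neg, inv_neg, div_eq_mul_inv, ← Complex.exp_neg,
    Complex.ofReal_neg]
  simp only [neg_neg, hexp1, hexp2]
  linear_combination (-4*(Real.sin θ : ℂ)*(Real.sin ϑ : ℂ)) * Complex.I_sq

theorem e3 : scherkPhi₃ ϑ 0 = 0 := by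
  obtain ⟨hexp1, hexp2⟩ := aux_setup ϑ
  simp only [scherkPhi₃, scherkSign, scherkPuncture, Fin.sum_univ_four,
    Matrix.cons_val_zero, Matrix.cons_val_one, Matrix.head_cons,
    Matrix.cons_val_two, Matrix.tail_cons, Matrix.cons_val_three,
    zero_sub, neg_neg, div_neg, inv_neg, div_eq_mul_inv, ← Complex.exp_neg,
    Complex.ofReal_one, Complex.ofReal_neg]
  simp only [neg_neg, hexp1, hexp2]
  ring

end


theorem stmt_5 (θ ϑ : ℝ) (hθ : θ ∈ Set.Ioo 0 (π / 2)) (hϑ : ϑ ∈ Set.Ioo 0 (π / 2))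
    (h : ∀ z : ℂ, (∀ j : Fin 4, z ≠ scherkPuncture ϑ j) →
      scherkPhi₁ θ ϑ z ^ 2 + scherkPhi₂ θ ϑ z ^ 2 + scherkPhi₃ ϑ z ^ 2 = 0) :
    ϑ = π / 2 - θ := by
  obtain ⟨hθ1, hθ2⟩ := hθ
  obtain ⟨hϑ1, hϑ2⟩ := hϑ
  have hπ := Real.pi_pos
  have h0 : ∀ j : Fin 4, (0:ℂ) ≠ scherkPuncture ϑ j := by
    intro j; fin_cases j <;>
      simp [scherkPuncture, Complex.exp_ne_zero, eq_comm, neg_eq_zero]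
  have key := h 0 h0
  rw [e1 θ ϑ, e2 θ ϑ, e3 ϑ] at key
  have keyR : (Real.sin θ * Real.sin ϑ)^2 = (Real.cos θ * Real.cos ϑ)^2 := by
    have hC : (((Real.sin θ : ℂ) * (Real.sin ϑ : ℂ))^2 : ℂ)
        = (((Real.cos θ : ℂ) * (Real.cos ϑ : ℂ))^2 : ℂ) := by
      linear_combination (1/16 : ℂ) * key +
        (-(Real.cos θ : ℂ)^2*(Real.cos ϑ : ℂ)^2) * Complex.I_sq
    exact_mod_cast hC
  have hsθ : 0 < Real.sin θ := Real.sin_pos_of_pos_of_lt_pi hθ1 (by linarith)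
  have hsϑ : 0 < Real.sin ϑ := Real.sin_pos_of_pos_of_lt_pi hϑ1 (by linarith)
  have hcθ : 0 < Real.cos θ := Real.cos_pos_of_mem_Ioo ⟨by linarith, hθ2⟩
  have hcϑ : 0 < Real.cos ϑ := Real.cos_pos_of_mem_Ioo ⟨by linarith, hϑ2⟩
  have heq : Real.cos θ * Real.cos ϑ = Real.sin θ * Real.sin ϑ := by
    nlinarith [mul_pos hsθ hsϑ, mul_pos hcθ hcϑ]
  have hcos0 : Real.cos (θ + ϑ) = 0 := by rw [Real.cos_add]; linarith
  have hhalf : θ + ϑ = π / 2 := by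
    have hco : Real.cos (θ + ϑ) = Real.cos (π / 2) := by
      rw [hcos0, Real.cos_pi_div_two]
    exact Real.injOn_cos ⟨by linarith, by linarith⟩ ⟨by linarith, by linarith⟩ hco
  linarith
end

section
/- For every θ ∈ (0, π/2), the complex numbers R₁ = −cos θ₁ − 2p₁·( cos θ₂/(p₁ − p₂) + cos θ₃/(p₁ − p₃) + cos θ₄/(p₁ − p₄) ) and R₂ = −sin θ₁ − 2p₁·( sin θ₂/(p₁ − p₂) + sin θ₃/(p₁ − p₃) + sin θ₄/(p₁ − p₄) ) are purely imaginary, i.e. Re(R₁) = 0 and Re(R₂) = 0. (R₁ and R₂ are the residues of Φ₁/w₁ and Φ₂/w₁ at the puncture p₁, where w₁(z) = i(z−p₁)/(z+p₁); their being purely imaginary reflects the symmetry of the Scherk surface under the involution ρ(z) = 1/conj(z).) -/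
open scoped Real

/-- R₁ = −cos θ₁ − 2p₁( cos θ₂/(p₁−p₂) + cos θ₃/(p₁−p₃) + cos θ₄/(p₁−p₄) ),
the residue of Φ₁/w₁ at p₁. -/
noncomputable def scherkR₁ (θ : ℝ) : ℂ :=
  -(Real.cos (scherkAngle θ 0) : ℂ)
    - 2 * scherkPuncture (π / 2 - θ) 0 *
      ((Real.cos (scherkAngle θ 1) : ℂ)
          / (scherkPuncture (π / 2 - θ) 0 - scherkPuncture (π / 2 - θ) 1)
        + (Real.cos (scherkAngle θ 2) : ℂ)
          / (scherkPuncture (π / 2 - θ) 0 - scherkPuncture (π / 2 - θ) 2)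
        + (Real.cos (scherkAngle θ 3) : ℂ)
          / (scherkPuncture (π / 2 - θ) 0 - scherkPuncture (π / 2 - θ) 3))

/-- R₂ = −sin θ₁ − 2p₁( sin θ₂/(p₁−p₂) + sin θ₃/(p₁−p₃) + sin θ₄/(p₁−p₄) ),
the residue of Φ₂/w₁ at p₁. -/
noncomputable def scherkR₂ (θ : ℝ) : ℂ :=
  -(Real.sin (scherkAngle θ 0) : ℂ)
    - 2 * scherkPuncture (π / 2 - θ) 0 *
      ((Real.sin (scherkAngle θ 1) : ℂ)
          / (scherkPuncture (π / 2 - θ) 0 - scherkPuncture (π / 2 - θ) 1)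
        + (Real.sin (scherkAngle θ 2) : ℂ)
          / (scherkPuncture (π / 2 - θ) 0 - scherkPuncture (π / 2 - θ) 2)
        + (Real.sin (scherkAngle θ 3) : ℂ)
          / (scherkPuncture (π / 2 - θ) 0 - scherkPuncture (π / 2 - θ) 3))

theorem stmt_9 (θ : ℝ) (hθ : θ ∈ Set.Ioo 0 (π / 2)) :
    (scherkR₁ θ).re = 0 ∧ (scherkR₂ θ).re = 0 := by
  obtain ⟨hθ0, hθ2⟩ := hθ
  have ha : Real.cos (π / 2 - θ) ≠ 0 := by
    rw [Real.cos_pi_div_two_sub]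
    exact ne_of_gt (Real.sin_pos_of_pos_of_lt_pi hθ0 (by linarith [Real.pi_pos]))
  have hb : Real.sin (π / 2 - θ) ≠ 0 := by
    rw [Real.sin_pi_div_two_sub]
    exact ne_of_gt (Real.cos_pos_of_mem_Ioo ⟨by linarith, hθ2⟩)
  have hA : (Real.cos (π / 2 - θ) : ℂ) ≠ 0 := by exact_mod_cast ha
  have hB : (Real.sin (π / 2 - θ) : ℂ) ≠ 0 := by exact_mod_cast hb
  have hem : Complex.exp (-(Complex.I * ((π / 2 - θ : ℝ) : ℂ))) =
      (Real.cos (π / 2 - θ) : ℂ) - (Real.sin (π / 2 - θ) : ℂ) * Complex.I := by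
    rw [show -(Complex.I * ((π / 2 - θ : ℝ) : ℂ)) = ((-(π / 2 - θ) : ℝ) : ℂ) * Complex.I by
        push_cast; ring,
      Complex.exp_mul_I, ← Complex.ofReal_cos, ← Complex.ofReal_sin, Real.cos_neg, Real.sin_neg,
      Complex.ofReal_neg]
    ring
  have hep : Complex.exp (Complex.I * ((π / 2 - θ : ℝ) : ℂ)) =
      (Real.cos (π / 2 - θ) : ℂ) + (Real.sin (π / 2 - θ) : ℂ) * Complex.I := by
    rw [mul_comm, Complex.exp_mul_I, ← Complex.ofReal_cos, ← Complex.ofReal_sin]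
  have hAB : (Real.cos (π / 2 - θ) : ℂ) - (Real.sin (π / 2 - θ) : ℂ) * Complex.I ≠ 0 :=
    hem ▸ Complex.exp_ne_zero _
  have e0 : scherkPuncture (π / 2 - θ) 0 =
      -((Real.cos (π / 2 - θ) : ℂ) - (Real.sin (π / 2 - θ) : ℂ) * Complex.I) := by
    show -Complex.exp (-(Complex.I * ((π / 2 - θ : ℝ) : ℂ))) = _
    rw [hem]
  have e1 : scherkPuncture (π / 2 - θ) 0 - scherkPuncture (π / 2 - θ) 1 =
      -(2 * (Real.cos (π / 2 - θ) : ℂ)) := by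
    show -Complex.exp (-(Complex.I * ((π / 2 - θ : ℝ) : ℂ)))
        - Complex.exp (Complex.I * ((π / 2 - θ : ℝ) : ℂ)) = _
    rw [hem, hep]; ring
  have e2 : scherkPuncture (π / 2 - θ) 0 - scherkPuncture (π / 2 - θ) 2 =
      -(2 * ((Real.cos (π / 2 - θ) : ℂ) - (Real.sin (π / 2 - θ) : ℂ) * Complex.I)) := by
    show -Complex.exp (-(Complex.I * ((π / 2 - θ : ℝ) : ℂ)))
        - Complex.exp (-(Complex.I * ((π / 2 - θ : ℝ) : ℂ))) = _
    rw [hem]; ring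
  have e3 : scherkPuncture (π / 2 - θ) 0 - scherkPuncture (π / 2 - θ) 3 =
      2 * (Real.sin (π / 2 - θ) : ℂ) * Complex.I := by
    show -Complex.exp (-(Complex.I * ((π / 2 - θ : ℝ) : ℂ)))
        - -Complex.exp (Complex.I * ((π / 2 - θ : ℝ) : ℂ)) = _
    rw [hem, hep]; ring
  have hc1 : Real.cos (scherkAngle θ 1) = -Real.cos θ := by
    show Real.cos (π - θ) = _; rw [Real.cos_pi_sub]
  have hc2 : Real.cos (scherkAngle θ 2) = -Real.cos θ := by
    show Real.cos (-π + θ) = _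
    rw [show -π + θ = -(π - θ) by ring, Real.cos_neg, Real.cos_pi_sub]
  have hc3 : Real.cos (scherkAngle θ 3) = Real.cos θ := by
    show Real.cos (-θ) = _; rw [Real.cos_neg]
  have hs1 : Real.sin (scherkAngle θ 1) = Real.sin θ := by
    show Real.sin (π - θ) = _; rw [Real.sin_pi_sub]
  have hs2 : Real.sin (scherkAngle θ 2) = -Real.sin θ := by
    show Real.sin (-π + θ) = _
    rw [show -π + θ = -(π - θ) by ring, Real.sin_neg, Real.sin_pi_sub]
  have hs3 : Real.sin (scherkAngle θ 3) = -Real.sin θ := by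
    show Real.sin (-θ) = _; rw [Real.sin_neg]
  have h0 : scherkAngle θ 0 = θ := rfl
  constructor
  · have key : scherkR₁ θ =
        (↑(-(Real.cos θ * (Real.sin (π / 2 - θ) / Real.cos (π / 2 - θ)
          + Real.cos (π / 2 - θ) / Real.sin (π / 2 - θ)))) : ℂ) * Complex.I := by
      rw [scherkR₁, e1, e2, e3, e0, hc1, hc2, hc3, h0]
      simp only [Complex.ofReal_neg, Complex.ofReal_mul, Complex.ofReal_add, Complex.ofReal_div]
      obtain ⟨A, hAe⟩ : ∃ A : ℂ, (Real.cos (π / 2 - θ) : ℂ) = A := ⟨_, rfl⟩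
      obtain ⟨B, hBe⟩ : ∃ B : ℂ, (Real.sin (π / 2 - θ) : ℂ) = B := ⟨_, rfl⟩
      obtain ⟨C, hCe⟩ : ∃ C : ℂ, (Real.cos θ : ℂ) = C := ⟨_, rfl⟩
      rw [hAe] at hA hAB ⊢
      rw [hBe] at hB hAB ⊢
      rw [hCe]
      field_simp
      ring_nf
      simp only [Complex.I_sq, show Complex.I ^ 3 = -Complex.I by
        rw [pow_succ, Complex.I_sq]; ring]
      ring
    rw [key]
    simp only [Complex.mul_re, Complex.I_re, Complex.I_im, Complex.ofReal_re, Complex.ofReal_im]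
    ring
  · have key : scherkR₂ θ =
        (↑(Real.sin θ * (Real.sin (π / 2 - θ) / Real.cos (π / 2 - θ)
          + Real.cos (π / 2 - θ) / Real.sin (π / 2 - θ))) : ℂ) * Complex.I := by
      rw [scherkR₂, e1, e2, e3, e0, hs1, hs2, hs3, h0]
      simp only [Complex.ofReal_neg, Complex.ofReal_mul, Complex.ofReal_add, Complex.ofReal_div]
      obtain ⟨A, hAe⟩ : ∃ A : ℂ, (Real.cos (π / 2 - θ) : ℂ) = A := ⟨_, rfl⟩
      obtain ⟨B, hBe⟩ : ∃ B : ℂ, (Real.sin (π / 2 - θ) : ℂ) = B := ⟨_, rfl⟩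
      obtain ⟨C, hCe⟩ : ∃ C : ℂ, (Real.sin θ : ℂ) = C := ⟨_, rfl⟩
      rw [hAe] at hA hAB ⊢
      rw [hBe] at hB hAB ⊢
      rw [hCe]
      field_simp
      ring_nf
      simp only [Complex.I_sq, show Complex.I ^ 3 = -Complex.I by
        rw [pow_succ, Complex.I_sq]; ring]
      ring
    rw [key]
    simp only [Complex.mul_re, Complex.I_re, Complex.I_im, Complex.ofReal_re, Complex.ofReal_im]
    ring
end

section
/- For every θ ∈ (0, π/2), with R₁ = −cos θ₁ − 2p₁·( cos θ₂/(p₁ − p₂) + cos θ₃/(p₁ − p₃) + cos θ₄/(p₁ − p₄) ) and R₂ = −sin θ₁ − 2p₁·( sin θ₂/(p₁ − p₂) + sin θ₃/(p₁ − p₃) + sin θ₄/(p₁ − p₄) ), one has i·sin(θ₁)·R₁ − i·cos(θ₁)·R₂ = 2. (This is the computation Υ₁ = 2 of the initial undulation amplitude, in the normal direction, of the end of the doubly periodic Scherk surface at the puncture p₁.) -/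
open scoped Real

theorem stmt_10 (θ : ℝ) (hθ : θ ∈ Set.Ioo 0 (π / 2)) :
    Complex.I * (Real.sin (scherkAngle θ 0) : ℂ) * scherkR₁ θ
      - Complex.I * (Real.cos (scherkAngle θ 0) : ℂ) * scherkR₂ θ = 2 := by
  obtain ⟨h1, h2⟩ := hθ
  have hs : 0 < Real.sin θ := Real.sin_pos_of_pos_of_lt_pi h1 (h2.trans (by linarith [Real.pi_pos]))
  have hc : 0 < Real.cos θ := Real.cos_pos_of_mem_Ioo ⟨by linarith [Real.pi_pos], h2⟩
  have hsc0 : Real.sin θ ^ 2 + Real.cos θ ^ 2 = 1 := Real.sin_sq_add_cos_sq θ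
  set s := Real.sin θ with hs_def
  set c := Real.cos θ with hc_def
  have hE : Complex.exp (Complex.I * ((π/2 - θ : ℝ) : ℂ)) = (s : ℂ) + Complex.I * c := by
    rw [mul_comm, Complex.exp_mul_I, ← Complex.ofReal_cos, ← Complex.ofReal_sin,
      Real.cos_pi_div_two_sub, Real.sin_pi_div_two_sub, ← hs_def, ← hc_def]
    ring
  have hE' : Complex.exp (-(Complex.I * ((π/2 - θ : ℝ) : ℂ))) = (s : ℂ) - Complex.I * c := by
    rw [show -(Complex.I * ((π/2 - θ : ℝ) : ℂ)) = ((-(π/2 - θ) : ℝ) : ℂ) * Complex.I by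
      push_cast; ring, Complex.exp_mul_I, ← Complex.ofReal_cos, ← Complex.ofReal_sin,
      Real.cos_neg, Real.sin_neg, Real.cos_pi_div_two_sub, Real.sin_pi_div_two_sub,
      ← hs_def, ← hc_def]
    push_cast
    ring
  have hCpi1 : (Real.cos (π - θ) : ℂ) = -(c : ℂ) := by
    rw [Real.cos_pi_sub, hc_def]; push_cast; ring
  have hSpi1 : (Real.sin (π - θ) : ℂ) = (s : ℂ) := by
    rw [Real.sin_pi_sub]
  have hCpi2 : (Real.cos (-π + θ) : ℂ) = -(c : ℂ) := by
    rw [show -π + θ = -(π - θ) by ring, Real.cos_neg, Real.cos_pi_sub, hc_def]; push_cast; ring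
  have hSpi2 : (Real.sin (-π + θ) : ℂ) = -(s : ℂ) := by
    rw [show -π + θ = -(π - θ) by ring, Real.sin_neg, Real.sin_pi_sub, hs_def]; push_cast; ring
  have hCn : (Real.cos (-θ) : ℂ) = (c : ℂ) := by rw [Real.cos_neg]
  have hSn : (Real.sin (-θ) : ℂ) = -(s : ℂ) := by rw [Real.sin_neg, hs_def]; push_cast; ring
  have hsc : (s : ℂ)^2 + (c : ℂ)^2 = 1 := by exact_mod_cast congrArg (fun x : ℝ => (x : ℂ)) hsc0
  have hs0 : (s : ℂ) ≠ 0 := by exact_mod_cast hs.ne'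
  have hc0 : (c : ℂ) ≠ 0 := by exact_mod_cast hc.ne'
  have hd3 : (s : ℂ) - Complex.I * c ≠ 0 := by
    intro h
    have := congrArg Complex.re h
    simp [Complex.sub_re, Complex.mul_re] at this
    exact hs.ne' (by exact_mod_cast this)
  clear_value s c
  clear hsc0 hs hc h1 h2
  simp only [scherkR₁, scherkR₂, scherkAngle, scherkPuncture, Matrix.cons_val_zero,
    Matrix.cons_val_one, Matrix.head_cons, Matrix.cons_val_two, Matrix.tail_cons,
    Matrix.cons_val_three, hE, hE', hCpi1, hSpi1, hCpi2, hSpi2, hCn, hSn, ← hs_def, ← hc_def]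
  have hd2 : -((s:ℂ) - Complex.I * c) - ((s:ℂ) + Complex.I * c) ≠ 0 := by
    rw [show -((s:ℂ) - Complex.I * c) - ((s:ℂ) + Complex.I * c) = -2 * s by ring]
    simpa using hs0
  have hd3' : -((s:ℂ) - Complex.I * c) - ((s:ℂ) - Complex.I * c) ≠ 0 := by
    rw [show -((s:ℂ) - Complex.I * c) - ((s:ℂ) - Complex.I * c)
      = -2 * ((s:ℂ) - Complex.I * c) by ring]
    exact mul_ne_zero (by norm_num) hd3
  have hd4 : -((s:ℂ) - Complex.I * c) - -((s:ℂ) + Complex.I * c) ≠ 0 := by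
    rw [show -((s:ℂ) - Complex.I * c) - -((s:ℂ) + Complex.I * c) = 2 * Complex.I * c by ring]
    exact mul_ne_zero (mul_ne_zero (by norm_num) Complex.I_ne_zero) hc0
  have h2 : (-2 : ℂ) ≠ 0 := by norm_num
  have h2I : (2 : ℂ) * Complex.I ≠ 0 := mul_ne_zero (by norm_num) Complex.I_ne_zero
  rw [show -((s:ℂ) - Complex.I * c) - ((s:ℂ) + Complex.I * c) = (-2 : ℂ) * s by ring,
    show -((s:ℂ) - Complex.I * c) - ((s:ℂ) - Complex.I * c)
      = (-2 : ℂ) * ((s:ℂ) - Complex.I * c) by ring,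
    show -((s:ℂ) - Complex.I * c) - -((s:ℂ) + Complex.I * c)
      = (2 * Complex.I) * c by ring]
  have e1 : ((s:ℂ) * -(c:ℂ) - (c:ℂ) * (s:ℂ)) / ((-2 : ℂ) * s) = (c:ℂ) := by
    rw [div_eq_iff (mul_ne_zero h2 hs0)]; ring
  have e0 : ((s:ℂ) * -(c:ℂ) - (c:ℂ) * -(s:ℂ)) / ((-2 : ℂ) * ((s:ℂ) - Complex.I * c)) = 0 := by
    rw [show (s:ℂ) * -(c:ℂ) - (c:ℂ) * -(s:ℂ) = 0 by ring, zero_div]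
  have e3 : ((s:ℂ) * (c:ℂ) - (c:ℂ) * -(s:ℂ)) / ((2 * Complex.I) * c) = -Complex.I * (s:ℂ) := by
    rw [div_eq_iff (mul_ne_zero h2I hc0)]
    linear_combination (2 * (s:ℂ) * c) * Complex.I_sq
  calc Complex.I * (s:ℂ) *
        (-(c:ℂ) - 2 * -((s:ℂ) - Complex.I * c) *
          (-(c:ℂ) / ((-2 : ℂ) * s)
            + -(c:ℂ) / ((-2 : ℂ) * ((s:ℂ) - Complex.I * c))
            + (c:ℂ) / ((2 * Complex.I) * c)))
      - Complex.I * (c:ℂ) *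
        (-(s:ℂ) - 2 * -((s:ℂ) - Complex.I * c) *
          ((s:ℂ) / ((-2 : ℂ) * s)
            + -(s:ℂ) / ((-2 : ℂ) * ((s:ℂ) - Complex.I * c))
            + -(s:ℂ) / ((2 * Complex.I) * c)))
      = 2 * Complex.I * ((s:ℂ) - Complex.I * c) *
          (((s:ℂ) * -(c:ℂ) - (c:ℂ) * (s:ℂ)) / ((-2 : ℂ) * s)
            + ((s:ℂ) * -(c:ℂ) - (c:ℂ) * -(s:ℂ)) / ((-2 : ℂ) * ((s:ℂ) - Complex.I * c))
            + ((s:ℂ) * (c:ℂ) - (c:ℂ) * -(s:ℂ)) / ((2 * Complex.I) * c)) := by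
        ring
    _ = 2 * Complex.I * ((s:ℂ) - Complex.I * c) * ((c:ℂ) + 0 + -Complex.I * (s:ℂ)) := by
        rw [e1, e0, e3]
    _ = 2 := by
        linear_combination (-2 * Complex.I ^ 2) * hsc
          + (2 * Complex.I * (s:ℂ) * c - 2) * Complex.I_sq
end

section
/- For every θ ∈ (0, π/2), the function f(z) = −log|i(z − p₁)/(z + p₁)| + log|z − p₁| + log|z − p₃| − log|z − p₂| − log|z − p₄| tends to −log(sin θ · cos θ) as z tends to p₁ within ℂ \ {p₁}. (This computes the vertical asymptotic offset ν₁ = −σ₁ log(sin θ cos θ) of the Scherk end at p₁: log|z−p₁| + log|z−p₃| − log|z−p₂| − log|z−p₄| is the real part of ∫₀^z Φ₃ and log|i(z−p₁)/(z+p₁)| = log|w₁(z)| is the logarithmic term that must be subtracted.) -/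
open scoped Real

theorem stmt_11 (θ : ℝ) (hθ : θ ∈ Set.Ioo 0 (π / 2)) :
    Filter.Tendsto
      (fun z : ℂ =>
        -Real.log (norm
            (Complex.I * (z - scherkPuncture (π / 2 - θ) 0)
              / (z + scherkPuncture (π / 2 - θ) 0)))
          + Real.log (norm (z - scherkPuncture (π / 2 - θ) 0))
          + Real.log (norm (z - scherkPuncture (π / 2 - θ) 2))
          - Real.log (norm (z - scherkPuncture (π / 2 - θ) 1))
          - Real.log (norm (z - scherkPuncture (π / 2 - θ) 3)))
      (nhdsWithin (scherkPuncture (π / 2 - θ) 0) {scherkPuncture (π / 2 - θ) 0}ᶜ)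
      (nhds (-Real.log (Real.sin θ * Real.cos θ))) := by
  obtain ⟨hθ0, hθ2⟩ := hθ
  have hpi := Real.pi_pos
  have hsin : 0 < Real.sin θ := Real.sin_pos_of_pos_of_lt_pi hθ0 (by linarith)
  have hcos : 0 < Real.cos θ := Real.cos_pos_of_mem_Ioo ⟨by linarith, hθ2⟩
  set ϑ : ℝ := π / 2 - θ with hϑdef
  set p1 : ℂ := scherkPuncture ϑ 0 with hp1def
  set p2 : ℂ := scherkPuncture ϑ 1 with hp2def
  set p3 : ℂ := scherkPuncture ϑ 2 with hp3def
  set p4 : ℂ := scherkPuncture ϑ 3 with hp4def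
  have hcosϑ : Real.cos ϑ = Real.sin θ := Real.cos_pi_div_two_sub θ
  have hsinϑ : Real.sin ϑ = Real.cos θ := Real.sin_pi_div_two_sub θ
  have hcexp : Complex.exp ((ϑ : ℂ) * Complex.I)
      = Complex.cos ϑ + Complex.sin ϑ * Complex.I := Complex.exp_mul_I _
  have hcexp' : Complex.exp (-((ϑ : ℂ) * Complex.I))
      = Complex.cos ϑ - Complex.sin ϑ * Complex.I := by
    rw [← neg_mul, Complex.exp_mul_I, Complex.cos_neg, Complex.sin_neg]; ring
  have hp1 : p1 = -(Complex.cos ϑ - Complex.sin ϑ * Complex.I) := by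
    rw [hp1def]; simp only [scherkPuncture, Matrix.cons_val_zero]
    rw [mul_comm Complex.I, hcexp']
  have hp2 : p2 = Complex.cos ϑ + Complex.sin ϑ * Complex.I := by
    rw [hp2def]; simp only [scherkPuncture, Matrix.cons_val_one, Matrix.head_cons, Matrix.cons_val_zero]
    rw [mul_comm Complex.I, hcexp]
  have hp3 : p3 = Complex.cos ϑ - Complex.sin ϑ * Complex.I := by
    rw [hp3def]
    simp only [scherkPuncture, Matrix.cons_val_two, Matrix.tail_cons, Matrix.head_cons]
    rw [mul_comm Complex.I, hcexp']
  have hp4 : p4 = -(Complex.cos ϑ + Complex.sin ϑ * Complex.I) := by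
    rw [hp4def]
    simp only [scherkPuncture, Matrix.cons_val_three, Matrix.tail_cons, Matrix.head_cons]
    rw [mul_comm Complex.I, hcexp]
  -- absolute values at the puncture
  have hA1 : norm (p1 + p1) = 2 := by
    have h : p1 + p1 = (-2 : ℂ) * Complex.exp (-(Complex.I * (ϑ : ℂ))) := by
      rw [hp1def]; simp only [scherkPuncture, Matrix.cons_val_zero]; ring
    rw [h, norm_mul, Complex.norm_exp]
    simp
  have hA3 : norm (p1 - p3) = 2 := by
    have h : p1 - p3 = (-2 : ℂ) * Complex.exp (-(Complex.I * (ϑ : ℂ))) := by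
      rw [hp1def, hp3def]
      simp only [scherkPuncture, Matrix.cons_val_zero, Matrix.cons_val_two, Matrix.tail_cons,
        Matrix.head_cons]
      ring
    rw [h, norm_mul, Complex.norm_exp]
    simp
  have hA2 : norm (p1 - p2) = 2 * Real.sin θ := by
    have h : p1 - p2 = (-2 : ℂ) * Complex.cos ϑ := by rw [hp1, hp2]; ring
    rw [h, norm_mul, ← Complex.ofReal_cos, Complex.norm_real, Real.norm_eq_abs,
      abs_of_pos (by rw [hcosϑ]; exact hsin)]
    simp [hcosϑ]
  have hA4 : norm (p1 - p4) = 2 * Real.cos θ := by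
    have h : p1 - p4 = (2 : ℂ) * Complex.sin ϑ * Complex.I := by rw [hp1, hp4]; ring
    rw [h, norm_mul, norm_mul, ← Complex.ofReal_sin, Complex.norm_real, Real.norm_eq_abs, Complex.norm_I,
      abs_of_pos (by rw [hsinϑ]; exact hcos)]
    simp [hsinϑ]
  have hp1p1 : p1 + p1 ≠ 0 := by
    intro h; rw [h] at hA1; simp at hA1
  -- the continuous model function
  have t1 : Filter.Tendsto (fun z : ℂ => Real.log (norm (z + p1))) (nhds p1)
      (nhds (Real.log 2)) := by
    have hc : ContinuousAt (fun z : ℂ => Real.log (norm (z + p1))) p1 :=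
      (Real.continuousAt_log (by rw [hA1]; norm_num)).comp
        (continuous_norm.continuousAt.comp (by fun_prop))
    simpa [hA1] using hc.tendsto
  have t3 : Filter.Tendsto (fun z : ℂ => Real.log (norm (z - p3))) (nhds p1)
      (nhds (Real.log 2)) := by
    have hc : ContinuousAt (fun z : ℂ => Real.log (norm (z - p3))) p1 :=
      (Real.continuousAt_log (by rw [hA3]; norm_num)).comp
        (continuous_norm.continuousAt.comp (by fun_prop))
    simpa [hA3] using hc.tendsto
  have t2 : Filter.Tendsto (fun z : ℂ => Real.log (norm (z - p2))) (nhds p1)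
      (nhds (Real.log (2 * Real.sin θ))) := by
    have hc : ContinuousAt (fun z : ℂ => Real.log (norm (z - p2))) p1 :=
      (Real.continuousAt_log (by rw [hA2]; positivity)).comp
        (continuous_norm.continuousAt.comp (by fun_prop))
    simpa [hA2] using hc.tendsto
  have t4 : Filter.Tendsto (fun z : ℂ => Real.log (norm (z - p4))) (nhds p1)
      (nhds (Real.log (2 * Real.cos θ))) := by
    have hc : ContinuousAt (fun z : ℂ => Real.log (norm (z - p4))) p1 :=
      (Real.continuousAt_log (by rw [hA4]; positivity)).comp
        (continuous_norm.continuousAt.comp (by fun_prop))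
    simpa [hA4] using hc.tendsto
  have hg : Filter.Tendsto
      (fun z : ℂ => Real.log (norm (z + p1)) + Real.log (norm (z - p3))
        - Real.log (norm (z - p2)) - Real.log (norm (z - p4)))
      (nhds p1)
      (nhds (Real.log 2 + Real.log 2 - Real.log (2 * Real.sin θ)
        - Real.log (2 * Real.cos θ))) := ((t1.add t3).sub t2).sub t4
  have hL : Real.log 2 + Real.log 2 - Real.log (2 * Real.sin θ) - Real.log (2 * Real.cos θ)
      = -Real.log (Real.sin θ * Real.cos θ) := by
    rw [Real.log_mul two_ne_zero hsin.ne', Real.log_mul two_ne_zero hcos.ne',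
      Real.log_mul hsin.ne' hcos.ne']
    ring
  rw [← hL]
  refine Filter.Tendsto.congr' ?_ (hg.mono_left nhdsWithin_le_nhds)
  have hev : ∀ᶠ z : ℂ in nhds p1, z + p1 ≠ 0 := by
    have hc : ContinuousAt (fun z : ℂ => z + p1) p1 := by fun_prop
    exact hc.eventually_ne hp1p1
  filter_upwards [self_mem_nhdsWithin, hev.filter_mono nhdsWithin_le_nhds] with z hz hz0
  have hzne : z ≠ p1 := hz
  have h1 : norm (z - p1) ≠ 0 := by
    simp [sub_eq_zero, hzne]
  have h2 : norm (z + p1) ≠ 0 := by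
    simp [hz0]
  have key : Real.log (norm (Complex.I * (z - p1) / (z + p1)))
      = Real.log (norm (z - p1)) - Real.log (norm (z + p1)) := by
    rw [norm_div, norm_mul, Complex.norm_I, one_mul, Real.log_div h1 h2]
  rw [key]
  ring
end
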